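/- Let P, Q ⊆ ℕ be disjoint and inhabited. If there exists a winning Arthur+Nimue strategy with partial computable Arthur strategy for the reduction game of the basic oracle {{0},{1}} to the basic oracle {P, Q} (i.e. the coding oracle associated to (P,Q) is omniscient), then the decoding oracle d_{P⊗Q, Q⊗P} has a partial computable extension (i.e. the promise problem (P⊗Q, Q⊗P) is decidable). -/

import Mathlib

open Classical in
/-- The oracle game: the list of previous answers by Merlin up to stage `i`,
for the answer sequence `s`. -/
def prefixList (s : ℕ → ℕ) (i : ℕ) : List ℕ := List.ofFn (fun j : Fin i => s j)

/-- A winning Arthur+Nimue strategy for the reduction game of the basic oracle `ℱ`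
to the basic oracle `𝒢`. -/
def Winning (ℱ 𝒢 : Set (Set ℕ)) (σ : List ℕ →. Option ℕ) (ν : Set ℕ → List ℕ → Set ℕ) : Prop :=
  (∀ F ∈ ℱ, ∀ l : List ℕ, ν F l ∈ 𝒢) ∧
  ∀ F ∈ ℱ, ∀ s : ℕ → ℕ, (∀ i, s i ∈ ν F (prefixList s i)) →
    ∃ k, (∀ i ≤ k, (σ (prefixList s i)).Dom) ∧
      (∀ i < k, none ∈ σ (prefixList s i)) ∧
      ∃ u ∈ F, some u ∈ σ (prefixList s k)

/-- The encoding of an Arthur strategy as a partial function `ℕ →. ℕ`, via the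
standard Mathlib encodings of `List ℕ` and `Option ℕ`. -/
def arthurCode (σ : List ℕ →. Option ℕ) : ℕ →. ℕ :=
  fun n => (σ (Denumerable.ofNat (List ℕ) n)).map Encodable.encode

open Classical in
/-- The decoding oracle associated to the promise problem `(P, Q)`: value `0` on `P`,
value `1` on `Q`, undefined elsewhere. -/
noncomputable def dOracle (P Q : Set ℕ) : ℕ →. ℕ :=
  fun n => ⟨n ∈ P ∪ Q, fun _ => if n ∈ Q then 1 else 0⟩

open Classical in
/-- The characteristic function of a set of naturals. -/
noncomputable def chi (A : Set ℕ) : ℕ → ℕ := fun n => if n ∈ A then 1 else 0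

/-- The coded cartesian product of two sets of naturals. -/
def tensor (P Q : Set ℕ) : Set ℕ := {x | ∃ p ∈ P, ∃ q ∈ Q, x = Nat.pair p q}

infixl:70 " ⊗ " => tensor

/-- Oracle computability, as in Mathlib's `Nat.RecursiveIn`. -/
inductive Nat.RecursiveIn' (g : ℕ →. ℕ) : (ℕ →. ℕ) → Prop
  | zero : Nat.RecursiveIn' g fun _ => 0
  | succ : Nat.RecursiveIn' g Nat.succ
  | left : Nat.RecursiveIn' g fun n => (Nat.unpair n).1
  | right : Nat.RecursiveIn' g fun n => (Nat.unpair n).2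
  | oracle : Nat.RecursiveIn' g g
  | pair {f h : ℕ →. ℕ} (hf : Nat.RecursiveIn' g f) (hh : Nat.RecursiveIn' g h) :
      Nat.RecursiveIn' g fun n => (Nat.pair <$> f n <*> h n)
  | comp {f h : ℕ →. ℕ} (hf : Nat.RecursiveIn' g f) (hh : Nat.RecursiveIn' g h) :
      Nat.RecursiveIn' g fun n => h n >>= f
  | prec {f h : ℕ →. ℕ} (hf : Nat.RecursiveIn' g f) (hh : Nat.RecursiveIn' g h) :
      Nat.RecursiveIn' g
        (Nat.unpaired fun a n =>
          n.rec (f a) fun y IH => do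
            let i ← IH
            h (Nat.pair a (Nat.pair y i)))
  | rfind {f : ℕ →. ℕ} (hf : Nat.RecursiveIn' g f) :
      Nat.RecursiveIn' g fun a =>
        Nat.rfind fun n => (fun m => m = 0) <$> f (Nat.pair a n)

/-- `f` is T1-reducible to `g`: some partial function recursive in the oracle `g`
extends `f`. -/
def T1Reducible (f g : ℕ →. ℕ) : Prop :=
  ∃ h : ℕ →. ℕ, Nat.RecursiveIn' g h ∧ ∀ n : ℕ, ∀ a ∈ f n, a ∈ h n

/-- `f` is T1-computable: it has a partial computable extension. -/
def T1Computable (f : ℕ →. ℕ) : Prop :=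
  ∃ h : ℕ →. ℕ, Nat.Partrec h ∧ ∀ n : ℕ, ∀ a ∈ f n, a ∈ h n

/-- Codes for oracle computations: Mathlib's `Nat.Partrec.Code` extended by an
`oracle` constructor. -/
inductive OCode : Type
  | zero : OCode
  | succ : OCode
  | left : OCode
  | right : OCode
  | oracle : OCode
  | pair : OCode → OCode → OCode
  | comp : OCode → OCode → OCode
  | prec : OCode → OCode → OCode
  | rfind' : OCode → OCode

/-- Evaluation of an oracle code relative to the oracle `g`, by the same structural
recursion as Mathlib's `Nat.Partrec.Code.eval`. -/
def OCode.eval (g : ℕ →. ℕ) : OCode → ℕ →. ℕ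
  | .zero => pure 0
  | .succ => Nat.succ
  | .left => ↑fun n : ℕ => n.unpair.1
  | .right => ↑fun n : ℕ => n.unpair.2
  | .oracle => g
  | .pair cf cg => fun n => Nat.pair <$> cf.eval g n <*> cg.eval g n
  | .comp cf cg => fun n => cg.eval g n >>= cf.eval g
  | .prec cf cg =>
    Nat.unpaired fun a n =>
      n.rec (cf.eval g a) fun y IH => do
        let i ← IH
        cg.eval g (Nat.pair a (Nat.pair y i))
  | .rfind' cf =>
    Nat.unpaired fun a m =>
      (Nat.rfind fun n => (fun m => m = 0) <$> cf.eval g (Nat.pair a (n + m))).map (· + m)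

/-- The `n`-th oracle code. -/
def OCode.ofNat : ℕ → OCode
  | 0 => .zero
  | 1 => .succ
  | 2 => .left
  | 3 => .right
  | 4 => .oracle
  | n + 5 =>
    have h1 : (n / 4).unpair.1 < n + 5 :=
      lt_of_le_of_lt (le_trans (Nat.unpair_left_le _) (Nat.div_le_self _ _)) (by omega)
    have h2 : (n / 4).unpair.2 < n + 5 :=
      lt_of_le_of_lt (le_trans (Nat.unpair_right_le _) (Nat.div_le_self _ _)) (by omega)
    if n % 4 = 0 then .pair (OCode.ofNat (n / 4).unpair.1) (OCode.ofNat (n / 4).unpair.2)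
    else if n % 4 = 1 then .comp (OCode.ofNat (n / 4).unpair.1) (OCode.ofNat (n / 4).unpair.2)
    else if n % 4 = 2 then .prec (OCode.ofNat (n / 4).unpair.1) (OCode.ofNat (n / 4).unpair.2)
    else .rfind' (OCode.ofNat (n / 4).unpair.1)

/-- `φ_e^g`: the evaluation of the `e`-th oracle code relative to the oracle `g`. -/
def phi (g : ℕ →. ℕ) (e : ℕ) : ℕ →. ℕ := (OCode.ofNat e).eval g

/-- `H_i^A`: the set of (codes of) oracle programs which, run with the characteristic
function of `A` as oracle, halt on input `0` with output `i`. -/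
def Hset (A : Set ℕ) (i : ℕ) : Set ℕ := {e : ℕ | (i : ℕ) ∈ phi (chi A) e 0}



namespace CertAux

def abElt (a b β : ℕ) : ℕ := if β = 0 then a else b
def pqElt (p q π β : ℕ) : ℕ := if decide (π = 0) = decide (β = 0) then p else q

def OkC (σ : List ℕ →. Option ℕ) (T : List (List ℕ × ℕ)) (l : List ℕ) : Prop :=
  (∃ β, (l, β) ∈ T) ∨ some 0 ∈ σ l

def IsCert (σ : List ℕ →. Option ℕ) (a b p q π : ℕ) (T : List (List ℕ × ℕ))
    (l : List ℕ) : Prop :=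
  (∀ pr ∈ T, none ∈ σ pr.1 ∧ OkC σ T (pr.1 ++ [abElt a b pr.2]) ∧
      OkC σ T (pr.1 ++ [pqElt p q π pr.2])) ∧ OkC σ T l

theorem OkC_mono {σ T T' l} (h : ∀ x ∈ T, x ∈ T') (hl : OkC σ T l) : OkC σ T' l := by
  rcases hl with ⟨β, hβ⟩ | hs
  · exact Or.inl ⟨β, h _ hβ⟩
  · exact Or.inr hs

def runC (c : List ℕ → ℕ) : ℕ → List ℕ
  | 0 => []
  | m + 1 => runC c m ++ [c (runC c m)]

theorem length_runC (c : List ℕ → ℕ) : ∀ i, (runC c i).length = i := by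
  intro i; induction i with
  | zero => rfl
  | succ m ih => simp [runC, ih]

theorem prefixList_runC (c : List ℕ → ℕ) (i : ℕ) :
    prefixList (fun j => c (runC c j)) i = runC c i := by
  induction i with
  | zero => rfl
  | succ m ih =>
    rw [prefixList, List.ofFn_succ']
    simp only [List.concat_eq_append, Fin.coe_castSucc, Fin.val_last]
    rw [show (List.ofFn fun j : Fin m => c (runC c j)) = prefixList (fun j => c (runC c j)) m
      from rfl, ih]
    rfl

def ConsL (ν : Set ℕ → List ℕ → Set ℕ) (F : Set ℕ) (l : List ℕ) : Prop :=
  ∀ i, i < l.length → l.getD i 0 ∈ ν F (l.take i)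

theorem ConsL_append {ν F l x} (hl : ConsL ν F l) (hx : x ∈ ν F l) :
    ConsL ν F (l ++ [x]) := by
  intro i hi
  rw [List.length_append, List.length_singleton] at hi
  rcases Nat.lt_or_ge i l.length with h | h
  · rw [List.getD_append _ _ _ _ h, List.take_append_of_le_length (le_of_lt h)]
    exact hl i h
  · have hi' : i = l.length := by omega
    subst hi'
    rw [List.getD_eq_getElem _ _ (by simp), List.getElem_concat_length rfl,
      List.take_left]
    exact hx

theorem exists_ext (ν : Set ℕ → List ℕ → Set ℕ) (F : Set ℕ)
    (hne : ∀ l, (ν F l).Nonempty) (l : List ℕ) (hl : ConsL ν F l) :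
    ∃ s : ℕ → ℕ, (∀ i, s i ∈ ν F (prefixList s i)) ∧
      ∀ i ≤ l.length, prefixList s i = l.take i := by
  classical
  set c : List ℕ → ℕ := fun l' =>
    if l'.length < l.length then l.getD l'.length 0 else (hne l').choose with hc
  have hrun : ∀ i ≤ l.length, runC c i = l.take i := by
    intro i hi; induction i with
    | zero => simp [runC]
    | succ m ih =>
      have hm : m < l.length := hi
      have ihm := ih (le_of_lt hm)
      have hlen : (l.take m).length = m := by simp [List.length_take]; omega
      rw [runC, ihm]
      have : c (l.take m) = l.getD m 0 := by
        rw [hc]; simp only; rw [if_pos (by rw [hlen]; exact hm), hlen]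
      rw [this, List.take_succ, List.getElem?_eq_getElem hm, List.getD_eq_getElem _ _ hm]
      rfl
  refine ⟨fun j => c (runC c j), ?_, ?_⟩
  · intro i
    rw [prefixList_runC]
    by_cases h : i < l.length
    · have hr := hrun i (le_of_lt h)
      have hlen : (runC c i).length = i := length_runC c i
      rw [hc]; simp only
      rw [if_pos (by rw [hlen]; exact h), hlen, hr]
      exact hl i h
    · rw [hc]; simp only
      rw [if_neg (by rw [length_runC]; exact h)]
      exact (hne (runC c i)).choose_spec
  · intro i hi; rw [prefixList_runC]; exact hrun i hi

theorem at_list {P Q : Set ℕ} {σ : List ℕ →. Option ℕ} {ν : Set ℕ → List ℕ → Set ℕ}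
    (hw : Winning {{0}, {1}} {P, Q} σ ν) (hP : P.Nonempty) (hQ : Q.Nonempty)
    (F : Set ℕ) (hF : F ∈ ({{0}, {1}} : Set (Set ℕ))) (l : List ℕ)
    (hc : ConsL ν F l) (hn : ∀ i, i < l.length → none ∈ σ (l.take i)) :
    none ∈ σ l ∨ ∃ u ∈ F, some u ∈ σ l := by
  have hne : ∀ l', (ν F l').Nonempty := by
    intro l'
    rcases hw.1 F hF l' with h | h
    · rw [h]; exact hP
    · rw [Set.mem_singleton_iff] at h; rw [h]; exact hQ
  obtain ⟨s, hcons, hpre⟩ := exists_ext ν F hne l hc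
  obtain ⟨k, _, hnone, u, hu, hsome⟩ := hw.2 F hF s hcons
  rcases lt_trichotomy k l.length with h | h | h
  · exfalso
    rw [hpre k (le_of_lt h)] at hsome
    exact absurd (Part.mem_unique hsome (hn k h)) (by simp)
  · right
    rw [h, hpre l.length le_rfl, List.take_length] at hsome
    exact ⟨u, hu, hsome⟩
  · left
    have := hnone l.length h
    rwa [hpre l.length le_rfl, List.take_length] at this

theorem some_val {P Q : Set ℕ} {σ : List ℕ →. Option ℕ} {ν : Set ℕ → List ℕ → Set ℕ}
    (hw : Winning {{0}, {1}} {P, Q} σ ν) (hP : P.Nonempty) (hQ : Q.Nonempty)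
    (F : Set ℕ) (hF : F ∈ ({{0}, {1}} : Set (Set ℕ))) (l : List ℕ)
    (hc : ConsL ν F l) (hn : ∀ i, i < l.length → none ∈ σ (l.take i))
    (u : ℕ) (hu : some u ∈ σ l) : u ∈ F := by
  rcases at_list hw hP hQ F hF l hc hn with h | ⟨u', hu', hs⟩
  · exact absurd (Part.mem_unique hu h) (by simp)
  · obtain rfl : u = u' := Option.some.inj (Part.mem_unique hu hs)
    exact hu'

theorem mem_le_fold (L : List (List ℕ × ℕ)) :
    ∀ pr ∈ L, pr.1.length ≤ L.foldr (fun x m => max x.1.length m) 0 := by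
  induction L with
  | nil => intro pr h; simp at h
  | cons hd tl ih =>
    intro pr h
    rcases List.mem_cons.mp h with rfl | h
    · simp [List.foldr]
    · exact le_trans (ih pr h) (by simp [List.foldr])

/-- Soundness: if every pair is a transversal (meets both `P` and `Q`),
then there is no certificate. -/
theorem no_cert {P Q : Set ℕ} {σ : List ℕ →. Option ℕ} {ν : Set ℕ → List ℕ → Set ℕ}
    {a b p q π : ℕ}
    (hw : Winning {{0}, {1}} {P, Q} σ ν) (hP : P.Nonempty) (hQ : Q.Nonempty)
    (Hs : ∀ C ∈ ({P, Q} : Set (Set ℕ)), ∀ β : ℕ, abElt a b β ∈ C ∨ pqElt p q π β ∈ C)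
    (T : List (List ℕ × ℕ)) (hT : IsCert σ a b p q π T []) : False := by
  set bound := T.foldr (fun x m => max x.1.length m) 0 with hb
  have key : ∀ k (l : List ℕ), bound < l.length + k → OkC σ T l → ConsL ν {1} l →
      (∀ i, i < l.length → none ∈ σ (l.take i)) → False := by
    intro k
    induction k with
    | zero =>
      intro l hlt hok hcons hn
      rcases hok with ⟨β, hβ⟩ | hs
      · have := mem_le_fold T _ hβ
        simp only at this; omega
      · have := some_val hw hP hQ {1} (Or.inr rfl) l hcons hn 0 hs
        simp at this
    | succ k ih =>
      intro l hlt hok hcons hn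
      rcases hok with ⟨β, hβ⟩ | hs
      · obtain ⟨hnone, hok1, hok2⟩ := hT.1 _ hβ
        have hC : ν {1} l ∈ ({P, Q} : Set (Set ℕ)) := hw.1 {1} (Or.inr rfl) l
        have hn' : ∀ i, i < (l.length + 1) →
            ∀ x, none ∈ σ ((l ++ [x]).take i) := by
          intro i hi x
          rcases Nat.lt_or_ge i l.length with h | h
          · rw [List.take_append_of_le_length (le_of_lt h)]; exact hn i h
          · have : i = l.length := by omega
            subst this; rw [List.take_left]; exact hnone
        rcases Hs (ν {1} l) hC β with hx | hx
        · exact ih (l ++ [abElt a b β]) (by simp; omega) hok1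
            (ConsL_append hcons hx) (fun i hi => hn' i (by simpa using hi) _)
        · exact ih (l ++ [pqElt p q π β]) (by simp; omega) hok2
            (ConsL_append hcons hx) (fun i hi => hn' i (by simpa using hi) _)
      · have := some_val hw hP hQ {1} (Or.inr rfl) l hcons hn 0 hs
        simp at this
  exact key (bound + 1) [] (by simp) hT.2 (fun i h => by simp at h) (fun i h => by simp at h)

/-- Existence: if for each of `P`, `Q` some pair lies entirely inside it,
then a certificate exists. -/
theorem cert_exists {P Q : Set ℕ} {σ : List ℕ →. Option ℕ} {ν : Set ℕ → List ℕ → Set ℕ}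
    {a b p q π : ℕ}
    (hw : Winning {{0}, {1}} {P, Q} σ ν) (hP : P.Nonempty) (hQ : Q.Nonempty)
    (Hex : ∀ C ∈ ({P, Q} : Set (Set ℕ)), ∃ β : ℕ, abElt a b β ∈ C ∧ pqElt p q π β ∈ C) :
    ∃ T, IsCert σ a b p q π T [] := by
  classical
  by_contra hno
  have hne : ∀ l', (ν {0} l').Nonempty := by
    intro l'
    rcases hw.1 {0} (Or.inl rfl) l' with h | h
    · rw [h]; exact hP
    · rw [Set.mem_singleton_iff] at h; rw [h]; exact hQ
  set Good : List ℕ → Prop := fun l => ConsL ν {0} l ∧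
    (∀ i, i < l.length → none ∈ σ (l.take i)) ∧ ¬∃ T, IsCert σ a b p q π T l with hG
  have hnoneG : ∀ l, Good l → none ∈ σ l := by
    intro l hg
    rcases at_list hw hP hQ {0} (Or.inl rfl) l hg.1 hg.2.1 with h | ⟨u, hu, hs⟩
    · exact h
    · exfalso
      apply hg.2.2
      refine ⟨[], fun pr h => absurd h (by simp), Or.inr ?_⟩
      simp only [Set.mem_singleton_iff] at hu
      rwa [hu] at hs
  have step : ∀ l, Good l → ∃ x, x ∈ ν {0} l ∧ Good (l ++ [x]) := by
    intro l hg
    have hC : ν {0} l ∈ ({P, Q} : Set (Set ℕ)) := hw.1 {0} (Or.inl rfl) l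
    obtain ⟨β, hab, hpq⟩ := Hex (ν {0} l) hC
    have hn' : ∀ x, ∀ i, i < (l ++ [x]).length → none ∈ σ ((l ++ [x]).take i) := by
      intro x i hi
      rw [List.length_append, List.length_singleton] at hi
      rcases Nat.lt_or_ge i l.length with h | h
      · rw [List.take_append_of_le_length (le_of_lt h)]; exact hg.2.1 i h
      · have : i = l.length := by omega
        subst this; rw [List.take_left]; exact hnoneG l hg
    by_cases h1 : ∃ T, IsCert σ a b p q π T (l ++ [abElt a b β])
    · by_cases h2 : ∃ T, IsCert σ a b p q π T (l ++ [pqElt p q π β])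
      · exfalso
        obtain ⟨T1, hT1⟩ := h1
        obtain ⟨T2, hT2⟩ := h2
        apply hg.2.2
        refine ⟨(l, β) :: (T1 ++ T2), ?_, Or.inl ⟨β, List.mem_cons_self⟩⟩
        intro pr hpr
        have hsub1 : ∀ x ∈ T1, x ∈ (l, β) :: (T1 ++ T2) := by
          intro x hx; exact List.mem_cons_of_mem _ (List.mem_append_left _ hx)
        have hsub2 : ∀ x ∈ T2, x ∈ (l, β) :: (T1 ++ T2) := by
          intro x hx; exact List.mem_cons_of_mem _ (List.mem_append_right _ hx)
        rcases List.mem_cons.mp hpr with rfl | hpr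
        · exact ⟨hnoneG l hg, OkC_mono hsub1 hT1.2, OkC_mono hsub2 hT2.2⟩
        · rcases List.mem_append.mp hpr with h | h
          · obtain ⟨h1', h2', h3'⟩ := hT1.1 pr h
            exact ⟨h1', OkC_mono hsub1 h2', OkC_mono hsub1 h3'⟩
          · obtain ⟨h1', h2', h3'⟩ := hT2.1 pr h
            exact ⟨h1', OkC_mono hsub2 h2', OkC_mono hsub2 h3'⟩
      · exact ⟨pqElt p q π β, hpq, ConsL_append hg.1 hpq, hn' _, h2⟩
    · exact ⟨abElt a b β, hab, ConsL_append hg.1 hab, hn' _, h1⟩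
  have hch : ∀ l, ∃ x, x ∈ ν {0} l ∧ (Good l → Good (l ++ [x])) := by
    intro l
    by_cases h : Good l
    · obtain ⟨x, hx, hgx⟩ := step l h
      exact ⟨x, hx, fun _ => hgx⟩
    · exact ⟨(hne l).choose, (hne l).choose_spec, fun h' => absurd h' h⟩
  set c : List ℕ → ℕ := fun l => (hch l).choose with hc
  have goodAll : ∀ i, Good (runC c i) := by
    intro i; induction i with
    | zero =>
      refine ⟨fun i h => absurd h (by simp [runC]), fun i h => absurd h (by simp [runC]), ?_⟩
      exact hno
    | succ m ih =>
      exact (hch (runC c m)).choose_spec.2 ih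
  have hconsS : ∀ i, (fun j => c (runC c j)) i ∈ ν {0} (prefixList (fun j => c (runC c j)) i) := by
    intro i; rw [prefixList_runC]
    exact (hch (runC c i)).choose_spec.1
  obtain ⟨k, _, _, u, hu, hsome⟩ := hw.2 {0} (Or.inl rfl) _ hconsS
  rw [prefixList_runC] at hsome
  exact absurd (Part.mem_unique hsome (hnoneG _ (goodAll k))) (by simp)

open Nat.Partrec (Code)
open Nat.Partrec.Code

def anyB (T : List (List ℕ × ℕ)) (f : List ℕ × ℕ → Bool) : Bool :=
  T.foldr (fun x r => f x || r) false

def allB (T : List (List ℕ × ℕ)) (f : List ℕ × ℕ → Bool) : Bool :=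
  T.foldr (fun x r => f x && r) true

theorem anyB_iff (T : List (List ℕ × ℕ)) (f : List ℕ × ℕ → Bool) :
    anyB T f = true ↔ ∃ pr ∈ T, f pr = true := by
  induction T with
  | nil => simp [anyB]
  | cons hd tl ih => simp [anyB, List.foldr] at ih ⊢; rw [ih]

theorem allB_iff (T : List (List ℕ × ℕ)) (f : List ℕ × ℕ → Bool) :
    allB T f = true ↔ ∀ pr ∈ T, f pr = true := by
  induction T with
  | nil => simp [allB]
  | cons hd tl ih => simp [allB, List.foldr] at ih ⊢; rw [ih]; tauto

def okB (cod : Code) (t : ℕ) (T : List (List ℕ × ℕ)) (l : List ℕ) : Bool :=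
  anyB T (fun pr => decide (pr.1 = l)) ||
    decide (evaln t cod (Encodable.encode l) = some 1)

def chkC (cod : Code) (a b p q π t : ℕ) (T : List (List ℕ × ℕ)) : Bool :=
  (allB T fun pr => (decide (evaln t cod (Encodable.encode pr.1) = some 0)
      && okB cod t T (pr.1 ++ [abElt a b pr.2]))
      && okB cod t T (pr.1 ++ [pqElt p q π pr.2]))
  && okB cod t T []

def chk (cod : Code) (p q : ℕ) (n k : ℕ) : Bool :=
  chkC cod n.unpair.1 n.unpair.2 p q k.unpair.2.unpair.1 k.unpair.1
    (Denumerable.ofNat _ k.unpair.2.unpair.2)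

section Bridge

variable {σ : List ℕ →. Option ℕ} {cod : Code}
theorem none_link (hlink : ∀ (l : List ℕ) (o : Option ℕ),
    o ∈ σ l ↔ Encodable.encode o ∈ eval cod (Encodable.encode l)) (l : List ℕ) : none ∈ σ l ↔ (0 : ℕ) ∈ eval cod (Encodable.encode l) := by
  have := hlink l none
  simpa using this

theorem some0_link (hlink : ∀ (l : List ℕ) (o : Option ℕ),
    o ∈ σ l ↔ Encodable.encode o ∈ eval cod (Encodable.encode l)) (l : List ℕ) : some 0 ∈ σ l ↔ (1 : ℕ) ∈ eval cod (Encodable.encode l) := by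
  have := hlink l (some 0)
  simpa [Encodable.encode_some] using this

theorem okB_sound (hlink : ∀ (l : List ℕ) (o : Option ℕ),
    o ∈ σ l ↔ Encodable.encode o ∈ eval cod (Encodable.encode l)) {t T l} (h : okB cod t T l = true) : OkC σ T l := by
  rcases Bool.or_eq_true_iff.mp h with h | h
  · obtain ⟨pr, hpr, hf⟩ := (anyB_iff _ _).mp h
    left
    refine ⟨pr.2, ?_⟩
    have : pr.1 = l := of_decide_eq_true hf
    rw [← this]
    exact hpr
  · right
    rw [some0_link hlink]
    exact evaln_sound (of_decide_eq_true h)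

theorem chkC_sound (hlink : ∀ (l : List ℕ) (o : Option ℕ),
    o ∈ σ l ↔ Encodable.encode o ∈ eval cod (Encodable.encode l)) {a b p q π t T} (h : chkC cod a b p q π t T = true) :
    IsCert σ a b p q π T [] := by
  rcases Bool.and_eq_true_iff.mp h with ⟨h1, h2⟩
  constructor
  · intro pr hpr
    have := (allB_iff _ _).mp h1 pr hpr
    rcases Bool.and_eq_true_iff.mp this with ⟨h3, h4⟩
    rcases Bool.and_eq_true_iff.mp h3 with ⟨h5, h6⟩
    refine ⟨?_, okB_sound hlink h6, okB_sound hlink h4⟩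
    rw [none_link hlink]
    exact evaln_sound (of_decide_eq_true h5)
  · exact okB_sound hlink h2

/-- eventually true -/
def Ev (f : ℕ → Bool) : Prop := ∃ t, ∀ t', t ≤ t' → f t' = true

theorem ev_const {f : ℕ → Bool} (h : ∀ t, f t = true) : Ev f := ⟨0, fun t' _ => h t'⟩

theorem ev_and {f g : ℕ → Bool} (hf : Ev f) (hg : Ev g) : Ev fun t => f t && g t := by
  obtain ⟨t1, h1⟩ := hf; obtain ⟨t2, h2⟩ := hg
  refine ⟨max t1 t2, fun t' h' => ?_⟩
  show (f t' && g t') = true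
  rw [h1 t' (le_trans (le_max_left _ _) h'), h2 t' (le_trans (le_max_right _ _) h')]
  rfl

theorem ev_evaln {x m : ℕ} (h : x ∈ eval cod m) : Ev fun t => decide (evaln t cod m = some x) := by
  obtain ⟨k, hk⟩ := evaln_complete.mp h
  exact ⟨k, fun t' h' => decide_eq_true (evaln_mono h' hk)⟩

theorem ev_allB {T : List (List ℕ × ℕ)} {f : ℕ → List ℕ × ℕ → Bool}
    (h : ∀ pr ∈ T, Ev fun t => f t pr) : Ev fun t => allB T (f t) := by
  induction T with
  | nil => exact ev_const (fun t => by simp [allB])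
  | cons hd tl ih =>
    have h1 := h hd (List.mem_cons_self)
    have h2 := ih (fun pr hpr => h pr (List.mem_cons_of_mem _ hpr))
    have := ev_and h1 h2
    exact this

theorem ev_okB (hlink : ∀ (l : List ℕ) (o : Option ℕ),
    o ∈ σ l ↔ Encodable.encode o ∈ eval cod (Encodable.encode l)) {T l} (h : OkC σ T l) : Ev fun t => okB cod t T l := by
  rcases h with ⟨β, hβ⟩ | hs
  · apply ev_const
    intro t
    apply Bool.or_eq_true_iff.mpr
    left
    exact (anyB_iff _ _).mpr ⟨(l, β), hβ, decide_eq_true rfl⟩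
  · have := ev_evaln (x := 1) (m := Encodable.encode l) ((some0_link hlink l).mp hs)
    obtain ⟨t, ht⟩ := this
    exact ⟨t, fun t' h' => Bool.or_eq_true_iff.mpr (Or.inr (ht t' h'))⟩

theorem chkC_complete (hlink : ∀ (l : List ℕ) (o : Option ℕ),
    o ∈ σ l ↔ Encodable.encode o ∈ eval cod (Encodable.encode l)) {a b p q π T} (h : IsCert σ a b p q π T []) :
    ∃ t, chkC cod a b p q π t T = true := by
  have hall : Ev fun t => allB T fun pr =>
      (decide (evaln t cod (Encodable.encode pr.1) = some 0)
        && okB cod t T (pr.1 ++ [abElt a b pr.2]))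
        && okB cod t T (pr.1 ++ [pqElt p q π pr.2]) := by
    apply ev_allB
    intro pr hpr
    obtain ⟨h1, h2, h3⟩ := h.1 pr hpr
    exact ev_and (ev_and (ev_evaln ((none_link hlink pr.1).mp h1))
      (ev_okB hlink h2)) (ev_okB hlink h3)
  have hroot := ev_okB hlink h.2
  obtain ⟨t, ht⟩ := ev_and hall hroot
  exact ⟨t, by have := ht t le_rfl; simpa [chkC] using this⟩

end Bridge

section Prim

open Primrec

theorem okB_primrec (cod : Code) :
    Primrec fun x : (ℕ × List (List ℕ × ℕ)) × List ℕ => okB cod x.1.1 x.1.2 x.2 := by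
  have hany : Primrec fun x : (ℕ × List (List ℕ × ℕ)) × List ℕ =>
      anyB x.1.2 (fun pr => decide (pr.1 = x.2)) := by
    have hh : Primrec₂ fun (x : (ℕ × List (List ℕ × ℕ)) × List ℕ)
        (y : (List ℕ × ℕ) × Bool) => decide (y.1.1 = x.2) || y.2 := by
      have d : Primrec fun z : ((ℕ × List (List ℕ × ℕ)) × List ℕ) × ((List ℕ × ℕ) × Bool) =>
          decide (z.2.1.1 = z.1.2) :=
        PrimrecPred.decide <| PrimrecRel.comp Primrec.eq (fst.comp (fst.comp snd)) (snd.comp fst)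
      have r : Primrec fun z : ((ℕ × List (List ℕ × ℕ)) × List ℕ) × ((List ℕ × ℕ) × Bool) =>
          z.2.2 := snd.comp snd
      exact (Primrec.dom_bool₂ (· || ·)).comp d r
    exact Primrec.list_foldr (snd.comp fst) (const false) hh
  have heval : Primrec fun x : (ℕ × List (List ℕ × ℕ)) × List ℕ =>
      decide (evaln x.1.1 cod (Encodable.encode x.2) = some 1) :=
    PrimrecPred.decide <| PrimrecRel.comp Primrec.eq
      (Nat.Partrec.Code.primrec_evaln.comp
        (((fst.comp fst).pair (const cod)).pair (Primrec.encode.comp snd)))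
      (const (some 1))
  exact (Primrec.dom_bool₂ (· || ·)).comp hany heval

theorem chk_primrec (cod : Code) (p q : ℕ) : Primrec₂ (chk cod p q) := by
  have ha : Primrec fun x : ℕ × ℕ => x.1.unpair.1 := fst.comp (unpair.comp fst)
  have hb : Primrec fun x : ℕ × ℕ => x.1.unpair.2 := snd.comp (unpair.comp fst)
  have ht : Primrec fun x : ℕ × ℕ => x.2.unpair.1 := fst.comp (unpair.comp snd)
  have hπ : Primrec fun x : ℕ × ℕ => x.2.unpair.2.unpair.1 :=
    fst.comp (unpair.comp (snd.comp (unpair.comp snd)))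
  have hT : Primrec fun x : ℕ × ℕ =>
      Denumerable.ofNat (List (List ℕ × ℕ)) x.2.unpair.2.unpair.2 :=
    (Primrec.ofNat _).comp (snd.comp (unpair.comp (snd.comp (unpair.comp snd))))
  -- components on z : (ℕ × ℕ) × ((List ℕ × ℕ) × Bool)
  have hza : Primrec fun z : (ℕ × ℕ) × ((List ℕ × ℕ) × Bool) => z.1.1.unpair.1 :=
    ha.comp fst
  have hzb : Primrec fun z : (ℕ × ℕ) × ((List ℕ × ℕ) × Bool) => z.1.1.unpair.2 :=
    hb.comp fst
  have hzt : Primrec fun z : (ℕ × ℕ) × ((List ℕ × ℕ) × Bool) => z.1.2.unpair.1 :=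
    ht.comp fst
  have hzπ : Primrec fun z : (ℕ × ℕ) × ((List ℕ × ℕ) × Bool) => z.1.2.unpair.2.unpair.1 :=
    hπ.comp fst
  have hzT : Primrec fun z : (ℕ × ℕ) × ((List ℕ × ℕ) × Bool) =>
      Denumerable.ofNat (List (List ℕ × ℕ)) z.1.2.unpair.2.unpair.2 := hT.comp fst
  have hzl : Primrec fun z : (ℕ × ℕ) × ((List ℕ × ℕ) × Bool) => z.2.1.1 :=
    fst.comp (fst.comp snd)
  have hzβ : Primrec fun z : (ℕ × ℕ) × ((List ℕ × ℕ) × Bool) => z.2.1.2 :=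
    snd.comp (fst.comp snd)
  have hzr : Primrec fun z : (ℕ × ℕ) × ((List ℕ × ℕ) × Bool) => z.2.2 :=
    snd.comp snd
  -- abElt and pqElt children
  have habE : Primrec fun z : (ℕ × ℕ) × ((List ℕ × ℕ) × Bool) =>
      abElt z.1.1.unpair.1 z.1.1.unpair.2 z.2.1.2 := by
    unfold abElt
    exact Primrec.ite (PrimrecRel.comp Primrec.eq hzβ (const 0)) hza hzb
  have hpqE : Primrec fun z : (ℕ × ℕ) × ((List ℕ × ℕ) × Bool) =>
      pqElt p q z.1.2.unpair.2.unpair.1 z.2.1.2 := by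
    unfold pqElt
    exact Primrec.ite
      (PrimrecRel.comp Primrec.eq
        (PrimrecPred.decide <| PrimrecRel.comp Primrec.eq hzπ (const 0))
        (PrimrecPred.decide <| PrimrecRel.comp Primrec.eq hzβ (const 0)))
      (const p) (const q)
  have hchild1 : Primrec fun z : (ℕ × ℕ) × ((List ℕ × ℕ) × Bool) =>
      z.2.1.1 ++ [abElt z.1.1.unpair.1 z.1.1.unpair.2 z.2.1.2] :=
    Primrec.list_append.comp hzl (Primrec.list_cons.comp habE (const []))
  have hchild2 : Primrec fun z : (ℕ × ℕ) × ((List ℕ × ℕ) × Bool) =>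
      z.2.1.1 ++ [pqElt p q z.1.2.unpair.2.unpair.1 z.2.1.2] :=
    Primrec.list_append.comp hzl (Primrec.list_cons.comp hpqE (const []))
  -- the three boolean atoms
  have he0 : Primrec fun z : (ℕ × ℕ) × ((List ℕ × ℕ) × Bool) =>
      decide (evaln z.1.2.unpair.1 cod (Encodable.encode z.2.1.1) = some 0) :=
    PrimrecPred.decide <| PrimrecRel.comp Primrec.eq
      (Nat.Partrec.Code.primrec_evaln.comp
        ((hzt.pair (const cod)).pair (Primrec.encode.comp hzl)))
      (const (some 0))
  have hok1 : Primrec fun z : (ℕ × ℕ) × ((List ℕ × ℕ) × Bool) =>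
      okB cod z.1.2.unpair.1
        (Denumerable.ofNat (List (List ℕ × ℕ)) z.1.2.unpair.2.unpair.2)
        (z.2.1.1 ++ [abElt z.1.1.unpair.1 z.1.1.unpair.2 z.2.1.2]) :=
    (okB_primrec cod).comp ((hzt.pair hzT).pair hchild1)
  have hok2 : Primrec fun z : (ℕ × ℕ) × ((List ℕ × ℕ) × Bool) =>
      okB cod z.1.2.unpair.1
        (Denumerable.ofNat (List (List ℕ × ℕ)) z.1.2.unpair.2.unpair.2)
        (z.2.1.1 ++ [pqElt p q z.1.2.unpair.2.unpair.1 z.2.1.2]) :=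
    (okB_primrec cod).comp ((hzt.pair hzT).pair hchild2)
  have hh : Primrec₂ fun (x : ℕ × ℕ) (y : (List ℕ × ℕ) × Bool) =>
      (((decide (evaln x.2.unpair.1 cod (Encodable.encode y.1.1) = some 0)
        && okB cod x.2.unpair.1
          (Denumerable.ofNat (List (List ℕ × ℕ)) x.2.unpair.2.unpair.2)
          (y.1.1 ++ [abElt x.1.unpair.1 x.1.unpair.2 y.1.2]))
        && okB cod x.2.unpair.1
          (Denumerable.ofNat (List (List ℕ × ℕ)) x.2.unpair.2.unpair.2)
          (y.1.1 ++ [pqElt p q x.2.unpair.2.unpair.1 y.1.2])) && y.2 : Bool) :=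
    (Primrec.dom_bool₂ (· && ·)).comp
      ((Primrec.dom_bool₂ (· && ·)).comp
        ((Primrec.dom_bool₂ (· && ·)).comp he0 hok1) hok2) hzr
  have hall : Primrec fun x : ℕ × ℕ =>
      allB (Denumerable.ofNat (List (List ℕ × ℕ)) x.2.unpair.2.unpair.2)
        (fun pr => (decide (evaln x.2.unpair.1 cod (Encodable.encode pr.1) = some 0)
          && okB cod x.2.unpair.1
            (Denumerable.ofNat (List (List ℕ × ℕ)) x.2.unpair.2.unpair.2)
            (pr.1 ++ [abElt x.1.unpair.1 x.1.unpair.2 pr.2]))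
          && okB cod x.2.unpair.1
            (Denumerable.ofNat (List (List ℕ × ℕ)) x.2.unpair.2.unpair.2)
            (pr.1 ++ [pqElt p q x.2.unpair.2.unpair.1 pr.2])) :=
    Primrec.list_foldr hT (const true) hh
  have hroot : Primrec fun x : ℕ × ℕ =>
      okB cod x.2.unpair.1
        (Denumerable.ofNat (List (List ℕ × ℕ)) x.2.unpair.2.unpair.2) [] :=
    (okB_primrec cod).comp ((ht.pair hT).pair (const []))
  exact (Primrec.dom_bool₂ (· && ·)).comp hall hroot

end Prim

end CertAux


open CertAux in
theorem stmt0 (P Q : Set ℕ) (hdisj : Disjoint P Q) (hP : P.Nonempty) (hQ : Q.Nonempty)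
    (hwin : ∃ (σ : List ℕ →. Option ℕ) (ν : Set ℕ → List ℕ → Set ℕ),
      Partrec σ ∧ Winning {{0}, {1}} {P, Q} σ ν) :
    T1Computable (dOracle (P ⊗ Q) (Q ⊗ P)) := by
  classical
  obtain ⟨σ, ν, hσ, hw⟩ := hwin
  obtain ⟨p₀, hp₀⟩ := id hP
  obtain ⟨q₀, hq₀⟩ := id hQ
  obtain ⟨cod, hcod⟩ := Nat.Partrec.Code.exists_code.mp hσ
  have hlink : ∀ (l : List ℕ) (o : Option ℕ),
      o ∈ σ l ↔ Encodable.encode o ∈ cod.eval (Encodable.encode l) := by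
    intro l o
    rw [hcod]
    simp [Encodable.encodek]
  set out : ℕ → ℕ := fun k => if k.unpair.2.unpair.1 = 0 then 0 else 1 with hout
  set h : ℕ →. ℕ := fun n => (Nat.rfind ↑(chk cod p₀ q₀ n)).map out with hhdef
  have hout_prim : Primrec out := by
    rw [hout]
    exact Primrec.ite
      (PrimrecRel.comp Primrec.eq
        (Primrec.fst.comp (Primrec.unpair.comp (Primrec.snd.comp Primrec.unpair)))
        (Primrec.const 0))
      (Primrec.const 0) (Primrec.const 1)
  have hcomp : Partrec h := by
    rw [hhdef]
    exact Partrec.map (Partrec.rfind ((chk_primrec cod p₀ q₀).to_comp.partrec₂))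
      ((hout_prim.to_comp.comp Computable.snd).to₂)
  refine ⟨h, Partrec.nat_iff.mp hcomp, ?_⟩
  intro n v hv
  obtain ⟨hd, hval⟩ := hv
  have hdisjT : ¬(n ∈ P ⊗ Q ∧ n ∈ Q ⊗ P) := by
    rintro ⟨⟨x, hx, y, hy, rfl⟩, ⟨x', hx', y', hy', he⟩⟩
    have h1 : x = x' ∧ y = y' := by
      have := congrArg Nat.unpair he
      simp [Nat.unpair_pair] at this
      exact ⟨this.1, this.2⟩
    exact Set.disjoint_left.mp hdisj hx (h1.1 ▸ hx')
  -- generic solver for both cases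
  have main : ∀ (π₀ : ℕ),
      (∀ C ∈ ({P, Q} : Set (Set ℕ)), ∃ β : ℕ,
        abElt n.unpair.1 n.unpair.2 β ∈ C ∧ pqElt p₀ q₀ π₀ β ∈ C) →
      (∀ π : ℕ, (π = 0 ↔ π₀ ≠ 0) →
        ∀ C ∈ ({P, Q} : Set (Set ℕ)), ∀ β : ℕ,
          abElt n.unpair.1 n.unpair.2 β ∈ C ∨ pqElt p₀ q₀ π β ∈ C) →
      (if π₀ = 0 then (0 : ℕ) else 1) ∈ h n := by
    intro π₀ Hex Hs
    obtain ⟨T₀, hT₀⟩ := cert_exists (a := n.unpair.1) (b := n.unpair.2) hw hP hQ Hex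
    obtain ⟨t₀, ht₀⟩ := chkC_complete hlink hT₀
    have hk₀ : chk cod p₀ q₀ n (Nat.pair t₀ (Nat.pair π₀ (Encodable.encode T₀))) = true := by
      rw [chk]
      simpa [Nat.unpair_pair, Denumerable.ofNat_encode] using ht₀
    have hdom : (Nat.rfind ↑(chk cod p₀ q₀ n)).Dom := by
      rw [Nat.rfind_dom]
      exact ⟨_, by simpa [Part.mem_some_iff] using hk₀, fun {m} _ => trivial⟩
    set kk := (Nat.rfind ↑(chk cod p₀ q₀ n)).get hdom with hkk
    have hmem : kk ∈ Nat.rfind ↑(chk cod p₀ q₀ n) := Part.get_mem hdom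
    have htrue : chk cod p₀ q₀ n kk = true := by
      have := Nat.rfind_spec hmem
      simpa [Part.mem_some_iff] using this
    have hcert : IsCert σ n.unpair.1 n.unpair.2 p₀ q₀ kk.unpair.2.unpair.1
        (Denumerable.ofNat (List (List ℕ × ℕ)) kk.unpair.2.unpair.2) [] :=
      chkC_sound hlink htrue
    have hπ : (kk.unpair.2.unpair.1 = 0 ↔ π₀ = 0) := by
      constructor
      · intro h0
        by_contra hne
        exact no_cert hw hP hQ (Hs _ (by simp [h0, hne]) ) _ hcert
      · intro h0
        by_contra hne
        exact no_cert hw hP hQ (Hs _ (by simp [hne, h0]) ) _ hcert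
    have houtkk : out kk = (if π₀ = 0 then (0:ℕ) else 1) := by
      by_cases hz : π₀ = 0
      · simp [hout, hπ.mpr hz, hz]
      · have h1 : ¬(Nat.unpair (Nat.unpair kk).2).1 = 0 := fun hh => hz (hπ.mp hh)
        simp [hout, h1, hz]
    rw [hhdef]
    exact houtkk ▸ Part.mem_map out hmem
  rcases hd with hPQ | hQP
  · -- n ∈ P ⊗ Q : value 0
    obtain ⟨x, hx, y, hy, rfl⟩ := hPQ
    have ha : (Nat.pair x y).unpair.1 ∈ P := by rw [Nat.unpair_pair]; exact hx
    have hb : (Nat.pair x y).unpair.2 ∈ Q := by rw [Nat.unpair_pair]; exact hy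
    have hv0 : v = 0 := by
      have hnmem : ¬ (Nat.pair x y ∈ Q ⊗ P) := fun hmem' => hdisjT ⟨⟨x, hx, y, hy, rfl⟩, hmem'⟩
      rw [← hval]
      show (if Nat.pair x y ∈ Q ⊗ P then (1:ℕ) else 0) = 0
      rw [if_neg hnmem]
    have Hex : ∀ C ∈ ({P, Q} : Set (Set ℕ)), ∃ β : ℕ,
        abElt (Nat.pair x y).unpair.1 (Nat.pair x y).unpair.2 β ∈ C ∧
        pqElt p₀ q₀ 0 β ∈ C := by
      rintro C (rfl | hC)
      · exact ⟨0, by simpa [abElt] using ha, by simpa [pqElt] using hp₀⟩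
      · rw [Set.mem_singleton_iff] at hC; subst hC
        exact ⟨1, by simpa [abElt] using hb, by simpa [pqElt] using hq₀⟩
    have Hs : ∀ π : ℕ, (π = 0 ↔ (0:ℕ) ≠ 0) →
        ∀ C ∈ ({P, Q} : Set (Set ℕ)), ∀ β : ℕ,
          abElt (Nat.pair x y).unpair.1 (Nat.pair x y).unpair.2 β ∈ C ∨
          pqElt p₀ q₀ π β ∈ C := by
      intro π hπ C hC β
      have hπ' : π ≠ 0 := by
        intro hz; exact (hπ.mp hz) rfl
      rcases hC with rfl | hC
      · by_cases hβ : β = 0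
        · exact Or.inl (by simpa [abElt, hβ] using ha)
        · exact Or.inr (by simpa [pqElt, hπ', hβ] using hp₀)
      · rw [Set.mem_singleton_iff] at hC; subst hC
        by_cases hβ : β = 0
        · exact Or.inr (by simpa [pqElt, hπ', hβ] using hq₀)
        · exact Or.inl (by simpa [abElt, hβ] using hb)
    rw [hv0]
    simpa using main 0 Hex Hs
  · -- n ∈ Q ⊗ P : value 1
    obtain ⟨x, hx, y, hy, rfl⟩ := hQP
    have ha : (Nat.pair x y).unpair.1 ∈ Q := by rw [Nat.unpair_pair]; exact hx
    have hb : (Nat.pair x y).unpair.2 ∈ P := by rw [Nat.unpair_pair]; exact hy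
    have hv1 : v = 1 := by
      rw [← hval]
      show (if Nat.pair x y ∈ Q ⊗ P then (1:ℕ) else 0) = 1
      rw [if_pos ⟨x, hx, y, hy, rfl⟩]
    have Hex : ∀ C ∈ ({P, Q} : Set (Set ℕ)), ∃ β : ℕ,
        abElt (Nat.pair x y).unpair.1 (Nat.pair x y).unpair.2 β ∈ C ∧
        pqElt p₀ q₀ 1 β ∈ C := by
      rintro C (rfl | hC)
      · exact ⟨1, by simpa [abElt] using hb, by simpa [pqElt] using hp₀⟩
      · rw [Set.mem_singleton_iff] at hC; subst hC
        exact ⟨0, by simpa [abElt] using ha, by simpa [pqElt] using hq₀⟩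
    have Hs : ∀ π : ℕ, (π = 0 ↔ (1:ℕ) ≠ 0) →
        ∀ C ∈ ({P, Q} : Set (Set ℕ)), ∀ β : ℕ,
          abElt (Nat.pair x y).unpair.1 (Nat.pair x y).unpair.2 β ∈ C ∨
          pqElt p₀ q₀ π β ∈ C := by
      intro π hπ C hC β
      have hπ' : π = 0 := hπ.mpr one_ne_zero
      rcases hC with rfl | hC
      · by_cases hβ : β = 0
        · exact Or.inr (by simpa [pqElt, hπ', hβ] using hp₀)
        · exact Or.inl (by simpa [abElt, hβ] using hb)
      · rw [Set.mem_singleton_iff] at hC; subst hC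
        by_cases hβ : β = 0
        · exact Or.inl (by simpa [abElt, hβ] using ha)
        · exact Or.inr (by simpa [pqElt, hπ', hβ] using hq₀)
    rw [hv1]
    simpa using main 1 Hex Hs
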